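/- arXiv:1403.7631 — 6 statements merged into one kernel-verified Lean document; each statement's English description precedes it below -/
import Mathlib

section
/- For every integer matrix M, every prime p, and every natural number r ≥ 1, tr(M^{p^r}) ≡ tr(M^{p^{r-1}}) (mod p^r). -/
/-!
`tr (M ^ N) = ∑ w, c w` with `c w = ∏ i, M (w i) (w (i + 1))`, the sum running over closed walks
`w : ZMod N → ι`. Rotation by `ZMod N` preserves `c`, so an orbit of size `d` contributes `d` times
a common weight; moreover a walk whose orbit has size `d` is `d`-periodic, so its weight is an
`N / d`-th power.

Let `N = p ^ (t + 1)`. A walk not fixed by rotation by `p ^ t` has an orbit of size `p ^ (t + 1)`,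
and the fixed walks are the walks `u` of length `p ^ t` repeated `p` times, of weight `c u ^ p`.
Hence `tr (M ^ N) ≡ ∑ u, c u ^ p` modulo `p ^ (t + 1)`. Among the walks of length `p ^ t`, an
orbit of size `p ^ s` has weight `x ^ p ^ (t - s)`, and `p ^ (t - s + 1)` divides
`x ^ p ^ (t - s + 1) - x ^ p ^ (t - s)` (Fermat's little theorem, lifted), so
`∑ u, c u ^ p ≡ ∑ u, c u = tr (M ^ p ^ t)`.
-/

open Finset AddAction

theorem Int.prime_pow_succ_dvd_pow_prime_pow_sub {p : ℕ} (hp : p.Prime) (x : ℤ) (k : ℕ) :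
    (p : ℤ) ^ (k + 1) ∣ x ^ p ^ (k + 1) - x ^ p ^ k := by
  rw [show p ^ (k + 1) = p * p ^ k from pow_succ' p k, pow_mul]
  exact dvd_sub_pow_of_dvd_sub (Int.prime_dvd_pow_self_sub hp x) k

theorem AddMonoidHom.prod_comp_eq_pow_of_surjective {G H M : Type*} [AddGroup G] [Fintype G]
    [AddGroup H] [Fintype H] [DecidableEq H] [CommMonoid M] (φ : G →+ H)
    (hφ : Function.Surjective φ) (f : H → M) :
    ∏ g, f (φ g) = (∏ h, f h) ^ (Fintype.card G / Fintype.card H) := by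
  have hfiber : ∀ h, #{g | φ g = h} = #{g | φ g = 0} := fun h =>
    AddMonoidHom.card_fiber_eq_of_mem_range φ (hφ h) (hφ 0)
  have hcard : Fintype.card G = Fintype.card H * #{g | φ g = 0} := by
    rw [← card_univ, card_eq_sum_card_fiberwise (t := univ) (f := φ) (by simp)]
    simp [hfiber]
  rw [prod_comp, image_univ_of_surjective hφ, hcard,
    Nat.mul_div_cancel_left _ Fintype.card_pos, ← prod_pow]
  simp_rw [hfiber]

theorem AddAction.dvd_sum_of_dvd_ncard_orbit_mul (G : Type*) {X : Type*} [AddGroup G]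
    [AddAction G X] [Fintype X] {f : X → ℤ} (hf : ∀ (g : G) x, f (g +ᵥ x) = f x) {m : ℤ}
    (h : ∀ x, m ∣ (orbit G x).ncard * f x) : m ∣ ∑ x, f x := by
  classical
  rw [← sum_fiberwise univ (Quotient.mk (orbitRel G X)) f]
  refine dvd_sum fun q _ => ?_
  obtain ⟨x, rfl⟩ := Quotient.exists_rep q
  have hfiber : ({y | (⟦y⟧ : Quotient (orbitRel G X)) = ⟦x⟧} : Finset X) =
      (orbit G x).toFinset := by
    ext y
    simp [Quotient.eq, orbitRel_apply]
  have hconst : ∀ y ∈ (orbit G x).toFinset, f y = f x := by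
    intro y hy
    obtain ⟨g, rfl⟩ := Set.mem_toFinset.mp hy
    exact hf g x
  rw [hfiber, sum_congr rfl hconst, sum_const, nsmul_eq_mul, ← Set.ncard_eq_toFinset_card']
  exact h x

theorem AddAction.vadd_vadd_eq_vadd_iff {G X : Type*} [AddCommGroup G] [AddAction G X]
    (e c : G) (x : X) : e +ᵥ (c +ᵥ x) = c +ᵥ x ↔ e +ᵥ x = x := by
  rw [vadd_vadd, add_comm, ← vadd_vadd, vadd_left_cancel_iff]

theorem ZMod.mem_zmultiples_of_castHom_eq_zero {N d : ℕ} (hd : d ∣ N) {x : ZMod N}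
    (hx : ZMod.castHom hd (ZMod d) x = 0) : x ∈ AddSubgroup.zmultiples (d : ZMod N) := by
  rw [← ZMod.intCast_zmod_cast x, map_intCast, ZMod.intCast_zmod_eq_zero_iff_dvd] at hx
  obtain ⟨q, hq⟩ := hx
  refine ⟨q, ?_⟩
  rw [← ZMod.intCast_zmod_cast x, hq]
  simp [mul_comm]

namespace Matrix

variable {ι R : Type*} [CommSemiring R]

theorem pow_succ_apply_eq_sum [Fintype ι] [DecidableEq ι] (M : Matrix ι ι R) (k : ℕ) (a b : ι) :
    (M ^ (k + 1)) a b =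
      ∑ v : Fin k → ι, ∏ i, M ((Fin.cons a v : Fin (k + 1) → ι) i) ((Fin.snoc v b : _ → ι) i) := by
  induction k generalizing a with
  | zero => simp [Fin.snoc]
  | succ k ih =>
    rw [pow_succ', mul_apply]
    simp_rw [ih, Finset.mul_sum]
    rw [← Fintype.sum_prod_type', ← (Fin.consEquiv fun _ => ι).sum_comp]
    refine Fintype.sum_congr _ _ fun ⟨j, v⟩ => ?_
    simp [Fin.consEquiv, ← Fin.cons_snoc_eq_snoc_cons, Fin.prod_univ_succ]

def cyclicProd {N : ℕ} [NeZero N] (M : Matrix ι ι R) (w : ZMod N → ι) : R :=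
  ∏ i, M (w i) (w (i + 1))

theorem trace_pow_eq_sum_cyclicProd [Fintype ι] [DecidableEq ι] (M : Matrix ι ι R) (N : ℕ)
    [NeZero N] : (M ^ N).trace = ∑ w : ZMod N → ι, M.cyclicProd w := by
  obtain ⟨k, rfl⟩ : ∃ k, N = k + 1 := Nat.exists_eq_succ_of_ne_zero (NeZero.ne N)
  have hcyc (v : Fin k → ι) (a : ι) :
      (Fin.snoc v a : Fin (k + 1) → ι) = (Fin.cons a v : Fin (k + 1) → ι) ∘ (· + 1) := by
    funext i
    induction i using Fin.lastCases with
    | last => simp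
    | cast j => simp
  -- `ZMod (k + 1)` is `Fin (k + 1)` by definition.
  change _ = ∑ w : Fin (k + 1) → ι, ∏ i, M (w i) (w (i + 1))
  simp_rw [trace, diag, pow_succ_apply_eq_sum, hcyc]
  rw [← (Fin.consEquiv fun _ => ι).sum_comp, Fintype.sum_prod_type]
  rfl

end Matrix

-- `ZMod N` acts on closed walks `ZMod N → ι` by rotation.
attribute [local instance] arrowAddAction

section Rotation

variable {ι : Type*} {N : ℕ}

theorem arrowAddAction_vadd_apply (c : ZMod N) (w : ZMod N → ι) (i : ZMod N) :
    (c +ᵥ w) i = w (-c + i) :=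
  rfl

theorem zmultiples_ncard_orbit_le_stabilizer (w : ZMod N → ι) :
    AddSubgroup.zmultiples ((orbit (ZMod N) w).ncard : ZMod N) ≤ stabilizer (ZMod N) w := by
  rw [AddSubgroup.zmultiples_le, ← index_stabilizer, ← nsmul_one]
  exact AddSubgroup.nsmul_index_mem _ 1

theorem ncard_orbit_dvd [NeZero N] (w : ZMod N → ι) : (orbit (ZMod N) w).ncard ∣ N := by
  simpa [index_stabilizer] using (stabilizer (ZMod N) w).index_dvd_card

theorem natCast_vadd_eq_self_of_ncard_orbit_dvd {w : ZMod N → ι} {m : ℕ}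
    (h : (orbit (ZMod N) w).ncard ∣ m) : (m : ZMod N) +ᵥ w = w := by
  obtain ⟨k, rfl⟩ := h
  exact zmultiples_ncard_orbit_le_stabilizer w ⟨k, by simp [mul_comm]⟩

theorem exists_eq_comp_castHom {d : ℕ} (hd : d ∣ N) {w : ZMod N → ι}
    (hw : (d : ZMod N) +ᵥ w = w) : ∃ v : ZMod d → ι, w = v ∘ ZMod.castHom hd (ZMod d) := by
  have hfiber : ∀ i j : ZMod N, ZMod.castHom hd (ZMod d) i = ZMod.castHom hd (ZMod d) j →
      w i = w j := by
    intro i j hij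
    have hker := ZMod.mem_zmultiples_of_castHom_eq_zero hd (x := j - i)
      (by rw [map_sub, hij, sub_self])
    have hji := congrFun (AddSubgroup.zmultiples_le_of_mem (mem_stabilizer_iff.mpr hw) hker) j
    simpa [arrowAddAction_vadd_apply] using hji
  refine ⟨fun j => w (Function.surjInv (ZMod.castHom_surjective hd) j), funext fun i => ?_⟩
  exact hfiber _ _ (Function.surjInv_eq (ZMod.castHom_surjective hd) _).symm

theorem natCast_vadd_comp_castHom {d : ℕ} (hd : d ∣ N) (v : ZMod d → ι) :
    (d : ZMod N) +ᵥ v ∘ ZMod.castHom hd (ZMod d) = v ∘ ZMod.castHom hd (ZMod d) := by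
  funext i
  simp only [arrowAddAction_vadd_apply, Function.comp_apply, map_add, map_neg, map_natCast,
    ZMod.natCast_self, neg_zero, zero_add]

theorem sum_filter_natCast_vadd_eq_self [Fintype ι] [DecidableEq ι] [NeZero N] {d : ℕ}
    [NeZero d] (hd : d ∣ N) {β : Type*} [AddCommMonoid β] (f : (ZMod N → ι) → β) :
    ∑ w with (d : ZMod N) +ᵥ w = w, f w = ∑ v : ZMod d → ι, f (v ∘ ZMod.castHom hd (ZMod d)) := by
  symm
  refine sum_nbij (· ∘ ZMod.castHom hd (ZMod d)) (fun v _ => ?_) ?_ (fun w hw => ?_)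
    fun _ _ => rfl
  · simpa using natCast_vadd_comp_castHom hd v
  · exact fun v _ v' _ h => (ZMod.castHom_surjective hd).injective_comp_right h
  · obtain ⟨v, hv⟩ := exists_eq_comp_castHom hd (mem_filter.mp hw).2
    exact ⟨v, mem_coe.mpr (mem_univ v), hv.symm⟩

end Rotation

namespace Matrix

variable {ι R : Type*} [CommSemiring R]

theorem cyclicProd_vadd {N : ℕ} [NeZero N] (M : Matrix ι ι R) (c : ZMod N)
    (w : ZMod N → ι) : M.cyclicProd (c +ᵥ w) = M.cyclicProd w :=
  Fintype.prod_equiv (Equiv.addLeft (-c)) _ _ fun i => by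
    simp [arrowAddAction_vadd_apply, add_assoc]

theorem cyclicProd_comp_castHom {N d : ℕ} [NeZero N] [NeZero d] (M : Matrix ι ι R)
    (hd : d ∣ N) (v : ZMod d → ι) :
    M.cyclicProd (v ∘ ZMod.castHom hd (ZMod d)) = M.cyclicProd v ^ (N / d) := by
  have := (ZMod.castHom hd (ZMod d)).toAddMonoidHom.prod_comp_eq_pow_of_surjective
    (ZMod.castHom_surjective hd) fun j => M (v j) (v (j + 1))
  rw [ZMod.card, ZMod.card] at this
  simp only [cyclicProd, Function.comp_apply, map_add, map_one]
  exact this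

theorem exists_cyclicProd_eq_pow_div_ncard_orbit {N : ℕ} [NeZero N] (M : Matrix ι ι R)
    (w : ZMod N → ι) : ∃ x, M.cyclicProd w = x ^ (N / (orbit (ZMod N) w).ncard) := by
  have hd := ncard_orbit_dvd w
  have : NeZero (orbit (ZMod N) w).ncard :=
    ⟨fun h => NeZero.ne N (Nat.eq_zero_of_zero_dvd (h ▸ hd))⟩
  obtain ⟨v, hv⟩ := exists_eq_comp_castHom hd (natCast_vadd_eq_self_of_ncard_orbit_dvd dvd_rfl)
  refine ⟨M.cyclicProd v, ?_⟩
  rw [← M.cyclicProd_comp_castHom hd v, ← hv]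

end Matrix

section PrimePower

variable {ι : Type*} {p : ℕ} [hp : Fact p.Prime]

theorem ncard_orbit_eq_of_natCast_pow_vadd_ne {t : ℕ} {w : ZMod (p ^ (t + 1)) → ι}
    (hw : ((p ^ t : ℕ) : ZMod (p ^ (t + 1))) +ᵥ w ≠ w) :
    (orbit (ZMod (p ^ (t + 1))) w).ncard = p ^ (t + 1) := by
  obtain ⟨s, hs, hcard⟩ := (Nat.dvd_prime_pow hp.out).mp (ncard_orbit_dvd w)
  obtain hlt | rfl := hs.lt_or_eq
  · exact absurd (natCast_vadd_eq_self_of_ncard_orbit_dvd (hcard ▸ pow_dvd_pow p (by omega))) hw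
  · exact hcard

namespace Matrix

variable [Fintype ι]

theorem sum_cyclicProd_modEq_sum_cyclicProd_pow (M : Matrix ι ι ℤ) (t : ℕ) :
    ∑ w : ZMod (p ^ (t + 1)) → ι, M.cyclicProd w ≡
      ∑ u : ZMod (p ^ t) → ι, M.cyclicProd u ^ p [ZMOD p ^ (t + 1)] := by
  classical
  set e : ZMod (p ^ (t + 1)) := ((p ^ t : ℕ) : ZMod (p ^ (t + 1)))
  have hfixed : ∑ w : ZMod (p ^ (t + 1)) → ι with e +ᵥ w = w, M.cyclicProd w =
      ∑ u : ZMod (p ^ t) → ι, M.cyclicProd u ^ p := by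
    rw [sum_filter_natCast_vadd_eq_self (pow_dvd_pow p (t.le_add_right 1))]
    refine sum_congr rfl fun v _ => ?_
    rw [M.cyclicProd_comp_castHom, Nat.pow_div (t.le_add_right 1) hp.out.pos,
      Nat.add_sub_cancel_left, pow_one]
  have hfree :
      (p : ℤ) ^ (t + 1) ∣ ∑ w : ZMod (p ^ (t + 1)) → ι with ¬e +ᵥ w = w, M.cyclicProd w := by
    rw [sum_filter]
    refine AddAction.dvd_sum_of_dvd_ncard_orbit_mul (ZMod (p ^ (t + 1))) (fun c w => ?_)
      fun w => ?_
    · simp only [AddAction.vadd_vadd_eq_vadd_iff, cyclicProd_vadd]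
    · split_ifs with hw
      · simp
      · rw [ncard_orbit_eq_of_natCast_pow_vadd_ne hw]
        push_cast
        exact dvd_mul_right _ _
  rw [← sum_filter_add_sum_filter_not univ (fun w => e +ᵥ w = w), hfixed, Int.modEq_iff_dvd,
    sub_add_cancel_left, dvd_neg]
  exact hfree

theorem sum_cyclicProd_pow_modEq_sum_cyclicProd (M : Matrix ι ι ℤ) (t : ℕ) :
    ∑ u : ZMod (p ^ t) → ι, M.cyclicProd u ^ p ≡
      ∑ u : ZMod (p ^ t) → ι, M.cyclicProd u [ZMOD p ^ (t + 1)] := by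
  refine (Int.modEq_iff_dvd.mpr ?_).symm
  rw [← sum_sub_distrib]
  refine AddAction.dvd_sum_of_dvd_ncard_orbit_mul (ZMod (p ^ t))
    (fun c u => by rw [M.cyclicProd_vadd]) fun u => ?_
  obtain ⟨s, hs, hcard⟩ := (Nat.dvd_prime_pow hp.out).mp (ncard_orbit_dvd u)
  obtain ⟨x, hx⟩ := M.exists_cyclicProd_eq_pow_div_ncard_orbit u
  rw [hx, hcard, Nat.pow_div hs hp.out.pos, ← pow_mul, ← pow_succ]
  calc (p : ℤ) ^ (t + 1) = p ^ s * p ^ (t - s + 1) := by rw [← pow_add]; congr 1; omega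
    _ ∣ _ := by
      push_cast
      exact mul_dvd_mul_left _ (Int.prime_pow_succ_dvd_pow_prime_pow_sub hp.out x (t - s))

end Matrix

end PrimePower

theorem euler_congruence_trace (n : ℕ) (M : Matrix (Fin n) (Fin n) ℤ)
    (p : ℕ) (hp : p.Prime) (r : ℕ) (hr : 1 ≤ r) :
    (M ^ (p ^ r)).trace ≡ (M ^ (p ^ (r - 1))).trace [ZMOD (p ^ r)] := by
  have : Fact p.Prime := ⟨hp⟩
  obtain ⟨t, rfl⟩ := Nat.exists_eq_add_of_le' hr
  rw [Nat.add_sub_cancel, M.trace_pow_eq_sum_cyclicProd, M.trace_pow_eq_sum_cyclicProd]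
  exact (M.sum_cyclicProd_modEq_sum_cyclicProd_pow t).trans
    (M.sum_cyclicProd_pow_modEq_sum_cyclicProd t)
end

section
/- Let (N_k) be a sequence of integers such that N_k = Σ_{i=1}^r ρ_i λ_i^k for all k ≥ 1, where λ_1, ..., λ_r are distinct nonzero complex numbers and ρ_1, ..., ρ_r are nonzero integers, and suppose λ_i and λ_j are roots of the same irreducible polynomial over ℚ. Then ρ_i = ρ_j. -/
/-!
Each `λ_m` is algebraic: the `r + 1` windows `(N_{t+1}, …, N_{t+r})`, `t ≤ r`, are linearly
dependent over `ℚ`, and a dependence `∑ a_t N_{t+s+1} = 0` gives `p = ∑ a_t X^t ≠ 0` with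
`∑_m ρ_m λ_m p(λ_m) · λ_m^s = 0` for `s < r`, so `p(λ_m) = 0` by the invertibility of the
Vandermonde matrix. Hence `λ_i ↦ λ_j` extends to a `ℚ`-embedding `σ` of `ℚ(λ_1, …, λ_r)` into
`ℂ`, and applying `σ` gives a second representation `N_k = ∑ ρ_m σ(λ_m)^k` with
`σ(λ_i) = λ_j`. Power sums determine their coefficients at nonzero nodes (Vandermonde again),
so comparing the coefficients of `λ_j` in the two representations gives `ρ_j = ρ_i`.
-/

open Finset Function Polynomial

theorem Finset.sum_fiberwise_mul_pow_of_maps_to {M ι : Type*} [CommSemiring M] [DecidableEq M]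
    [Fintype ι] {S : Finset M} {f : ι → M} (hf : ∀ i, f i ∈ S) (a : ι → M) (k : ℕ) :
    ∑ z ∈ S, (∑ i with f i = z, a i) * z ^ k = ∑ i, a i * f i ^ k := by
  rw [← sum_fiberwise_of_maps_to (fun i _ => hf i)]
  refine sum_congr rfl fun z _ => ?_
  rw [sum_mul]
  exact sum_congr rfl fun i hi => by rw [(mem_filter.mp hi).2]

section PowerSums

variable {R : Type*} [CommRing R] [IsDomain R]

theorem Finset.eq_zero_of_forall_sum_mul_pow_eq_zero (S : Finset R) {c : R → R}
    (h : ∀ k < #S, ∑ z ∈ S, c z * z ^ k = 0) : ∀ z ∈ S, c z = 0 := by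
  set e := S.equivFin.symm
  have hv := Matrix.eq_zero_of_forall_pow_sum_mul_pow_eq_zero (f := fun t => (e t : R))
    (v := fun t => c (e t)) (Subtype.val_injective.comp e.injective) fun k => by
      rw [← h k k.isLt, ← S.sum_coe_sort]
      exact e.sum_comp (fun z : S => c z * (z : R) ^ (k : ℕ))
  intro z hz
  simpa using congrFun hv (e.symm ⟨z, hz⟩)

theorem sum_fiber_eq_of_forall_sum_mul_pow_succ_eq [DecidableEq R] {ι κ : Type*}
    [Fintype ι] [Fintype κ] {f : ι → R} {g : κ → R} {a : ι → R} {b : κ → R}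
    (h : ∀ k, ∑ i, a i * f i ^ (k + 1) = ∑ j, b j * g j ^ (k + 1)) {z : R} (hz : z ≠ 0) :
    ∑ i with f i = z, a i = ∑ j with g j = z, b j := by
  set S := insert z (univ.image f ∪ univ.image g)
  have hfS (i : ι) : f i ∈ S := by simp [S]
  have hgS (j : κ) : g j ∈ S := by simp [S]
  have key := S.eq_zero_of_forall_sum_mul_pow_eq_zero
    (c := fun w => (∑ i with f i = w, a i - ∑ j with g j = w, b j) * w) (fun k _ => by
      simp_rw [mul_assoc, ← pow_succ', sub_mul, sum_sub_distrib,
        sum_fiberwise_mul_pow_of_maps_to hfS, sum_fiberwise_mul_pow_of_maps_to hgS, h, sub_self])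
    z (mem_insert_self _ _)
  exact sub_eq_zero.mp ((mul_eq_zero.mp key).resolve_right hz)

theorem eq_of_forall_sum_mul_pow_succ_eq {ι κ : Type*} [Fintype ι] [Fintype κ]
    {f : ι → R} {g : κ → R} (hf : Injective f) (hg : Injective g) {a : ι → R} {b : κ → R}
    (h : ∀ k, ∑ i, a i * f i ^ (k + 1) = ∑ j, b j * g j ^ (k + 1)) {i : ι} {j : κ}
    (hij : f i = g j) (hi : f i ≠ 0) : a i = b j := by
  classical
  have := sum_fiber_eq_of_forall_sum_mul_pow_succ_eq h hi
  simp only [hf.eq_iff] at this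
  simpa [hij, hg.eq_iff, sum_filter] using this

end PowerSums

theorem isAlgebraic_of_forall_algebraMap_eq_sum_mul_pow {K L : Type*} [Field K] [CommRing L]
    [IsDomain L] [Algebra K L] {n : ℕ} {x c : Fin n → L} (hx : Injective x) (hc : ∀ m, c m ≠ 0)
    {N : ℕ → K} (hN : ∀ k, algebraMap K L (N k) = ∑ m, c m * x m ^ k) (m : Fin n) :
    IsAlgebraic K (x m) := by
  have hdep : ¬LinearIndependent K fun t : Fin (n + 1) => fun s : Fin n => N (t + s) :=
    fun h => by simpa using h.fintype_card_le_finrank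
  obtain ⟨a, ha, t₀, ht₀⟩ := Fintype.not_linearIndependent_iff.mp hdep
  set p : K[X] := ∑ t, C (a t) * X ^ (t : ℕ)
  have hp : p ≠ 0 := fun h0 => ht₀ <| by
    simpa [p, finsetSum_coeff, coeff_C_mul, coeff_X_pow, Fin.val_inj] using
      congrArg (coeff · t₀) h0
  have hroot : ∀ m, c m * aeval (x m) p = 0 := by
    refine congrFun (Matrix.eq_zero_of_forall_pow_sum_mul_pow_eq_zero hx fun s => ?_)
    calc ∑ m, c m * aeval (x m) p * x m ^ (s : ℕ)
        = ∑ t, algebraMap K L (a t) * ∑ m, c m * x m ^ (t + s : ℕ) := by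
          simp only [p, map_sum, map_mul, aeval_C, map_pow, aeval_X, mul_sum, sum_mul]
          rw [sum_comm]
          exact sum_congr rfl fun _ _ => sum_congr rfl fun _ _ => by ring
      _ = algebraMap K L (∑ t, a t * N (t + s)) := by simp [hN]
      _ = 0 := by simpa using congrArg (algebraMap K L) (congrFun ha s)
  exact ⟨p, hp, (mul_eq_zero.mp (hroot m)).resolve_left (hc m)⟩

theorem exists_conjugate_family {K L ι : Type*} [Field K] [Field L] [IsAlgClosed L]
    [Algebra K L]
    {x : ι → L} (hx : Injective x) (halg : ∀ m, IsAlgebraic K (x m)) {i : ι} {y : L}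
    (hy : aeval y (minpoly K (x i)) = 0) :
    ∃ x' : ι → L, Injective x' ∧ x' i = y ∧
      ∀ p : MvPolynomial ι K, MvPolynomial.aeval x p = 0 → MvPolynomial.aeval x' p = 0 := by
  set F := IntermediateField.adjoin K (Set.range x)
  have hmem (m : ι) : x m ∈ F := IntermediateField.subset_adjoin K _ ⟨m, rfl⟩
  obtain ⟨φ, hφ⟩ := IntermediateField.exists_algHom_adjoin_of_splits_of_aeval
    (by rintro _ ⟨m, rfl⟩; exact ⟨(halg m).isIntegral, IsAlgClosed.splits _⟩) (hmem i) hy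
  refine ⟨fun m => φ ⟨x m, hmem m⟩, fun m m' h => hx (congrArg Subtype.val (φ.injective h)),
    hφ, fun p hp => ?_⟩
  have hpF : MvPolynomial.aeval (fun m => (⟨x m, hmem m⟩ : F)) p = 0 :=
    F.val.injective <| by
      simpa only [AlgHom.toRingHom_eq_coe, RingHom.coe_coe, map_zero,
        MvPolynomial.comp_aeval_apply, IntermediateField.coe_val] using hp
  rw [← MvPolynomial.comp_aeval_apply, hpF, map_zero]

theorem conjugate_roots_equal_coeff (r : ℕ) (lam : Fin r → ℂ) (ρ : Fin r → ℤ)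
    (hlam_inj : Function.Injective lam) (hlam_ne : ∀ i, lam i ≠ 0)
    (hρ_ne : ∀ i, ρ i ≠ 0)
    (N : ℕ → ℤ)
    (hN : ∀ k : ℕ, 1 ≤ k → (N k : ℂ) = ∑ i, (ρ i : ℂ) * lam i ^ k)
    (i j : Fin r) (q : Polynomial ℚ) (hq : Irreducible q)
    (hi : Polynomial.aeval (lam i) q = 0) (hj : Polynomial.aeval (lam j) q = 0) :
    ρ i = ρ j := by
  have halg : ∀ m, IsAlgebraic ℚ (lam m) :=
    isAlgebraic_of_forall_algebraMap_eq_sum_mul_pow hlam_inj (c := fun m => ρ m * lam m)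
      (fun m => mul_ne_zero (Int.cast_ne_zero.mpr (hρ_ne m)) (hlam_ne m))
      (N := fun k => N (k + 1)) fun k => by simp [hN (k + 1) le_add_self, pow_succ', mul_assoc]
  have hconj : aeval (lam j) (minpoly ℚ (lam i)) = 0 := by
    rw [← minpoly.eq_of_irreducible hq hi, map_mul, hj, zero_mul]
  obtain ⟨ν, hν_inj, hνi, hν⟩ := exists_conjugate_family hlam_inj halg hconj
  have hνN (k : ℕ) (hk : 1 ≤ k) : (N k : ℂ) = ∑ m, (ρ m : ℂ) * ν m ^ k := by
    have := hν (MvPolynomial.C (N k : ℚ) - ∑ m, MvPolynomial.C (ρ m : ℚ) * MvPolynomial.X m ^ k)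
      (by simp [hN k hk])
    simpa [sub_eq_zero] using this
  have hρ : (ρ j : ℂ) = ρ i := eq_of_forall_sum_mul_pow_succ_eq hlam_inj hν_inj
    (fun k => (hN (k + 1) le_add_self).symm.trans (hνN (k + 1) le_add_self)) hνi.symm (hlam_ne j)
  exact_mod_cast hρ.symm
end

section
/- Let N_k = Σ_{i=1}^r ρ_i λ_i^k for k ≥ 1 with distinct nonzero complex λ_i and nonzero complex ρ_i, where r ≥ 2 and Σ_{i=1}^r ρ_i = 0. Then there exists i with 1 ≤ i ≤ r−1 such that N_i ≠ 0. -/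
theorem exp_sum_nonzero_early_of_sum_zero (r : ℕ) (hr : 2 ≤ r)
    (lam : Fin r → ℂ) (ρ : Fin r → ℂ)
    (hlam_inj : Function.Injective lam) (hlam_ne : ∀ i, lam i ≠ 0)
    (hρ_ne : ∀ i, ρ i ≠ 0) (hsum : ∑ i, ρ i = 0)
    (N : ℕ → ℂ)
    (hN : ∀ k : ℕ, 1 ≤ k → N k = ∑ i, ρ i * lam i ^ k) :
    ∃ i : ℕ, 1 ≤ i ∧ i ≤ r - 1 ∧ N i ≠ 0 := by
  by_contra h
  push_neg at h
  have key : ∀ k : Fin r, ∑ j, ρ j * lam j ^ (k : ℕ) = 0 := by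
    intro k
    rcases Nat.eq_zero_or_pos (k : ℕ) with hk | hk
    · simpa [hk] using hsum
    · have hle : (k : ℕ) ≤ r - 1 := Nat.le_pred_of_lt k.isLt
      rw [← hN k hk]
      exact h k hk hle
  have hzero : ρ = 0 :=
    Matrix.eq_zero_of_forall_pow_sum_mul_pow_eq_zero hlam_inj key
  exact hρ_ne ⟨0, by omega⟩ (by simp [hzero])
end

section
/- Let (N_k) be a sequence of nonnegative real numbers of the form N_k = Σ_{i=1}^r ρ_i λ_i^k with distinct nonzero complex λ_i, nonzero real ρ_i, and λ := max_i |λ_i| > 1. Then limsup_{k→∞} (log N_k)/k = log λ; in particular limsup N_k^{1/k} = λ. -/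
/-!
Write `s k = ∑ i, ρ i * lam i ^ k`. The upper bound `N k ≤ (∑ |ρ i|) L ^ k` is immediate. For the
lower bound, the transposed Vandermonde matrix of the distinct `lam i` sends `(ρ i * lam i ^ k)_i`
to `(s (k + j))_{j < r}`; inverting it, if `N k ≤ M ^ k` for all large `k` with `M < L`, then every
term `|ρ i| ‖lam i‖ ^ k` is `O(M ^ k)`, which fails for an index with `‖lam i‖ = L`. So
`N k ≥ M ^ k` infinitely often for every `M < L`, and both limsups follow.
-/

open Filter Topology

section Limsup

variable {α β : Type*} [ConditionallyCompleteLinearOrder β] [DenselyOrdered β] [NoMaxOrder β]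
  [NoMinOrder β] {f : Filter α} {u : α → β} {a : β}

theorem Filter.limsup_eq_of_forall_eventually_le_of_forall_frequently_ge
    (hup : ∀ b > a, ∀ᶠ x in f, u x ≤ b) (hlow : ∀ b < a, ∃ᶠ x in f, b ≤ u x) :
    limsup u f = a := by
  obtain ⟨b₁, hb₁⟩ := exists_gt a
  obtain ⟨b₀, hb₀⟩ := exists_lt a
  have hbdd : IsBoundedUnder (· ≤ ·) f u := isBoundedUnder_of_eventually_le (hup b₁ hb₁)
  have hcobdd : IsCoboundedUnder (· ≤ ·) f u := .of_frequently_ge (hlow b₀ hb₀)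
  exact le_antisymm ((limsup_le_iff' hcobdd hbdd).2 hup) ((le_limsup_iff' hcobdd hbdd).2 hlow)

theorem Filter.limsup_log_eq_log {v : α → ℝ} {L : ℝ}
    (hv : ∀ᶠ x in f, 0 ≤ v x) (hL : 1 ≤ L) (hup : ∀ b > L, ∀ᶠ x in f, v x ≤ b)
    (hlow : ∀ b < L, ∃ᶠ x in f, b ≤ v x) :
    limsup (fun x ↦ Real.log (v x)) f = Real.log L := by
  have hL0 : 0 < L := zero_lt_one.trans_le hL
  refine limsup_eq_of_forall_eventually_le_of_forall_frequently_ge (fun b hb ↦ ?_) (fun b hb ↦ ?_)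
  · filter_upwards [hv, hup _ ((Real.log_lt_iff_lt_exp hL0).1 hb)] with x hx0 hxb
    rcases hx0.eq_or_lt with hx0 | hx0
    · rw [← hx0, Real.log_zero]
      exact (Real.log_nonneg hL).trans hb.le
    · exact (Real.log_le_iff_le_exp hx0).2 hxb
  · refine (hlow _ ((Real.lt_log_iff_exp_lt hL0).1 hb)).mono fun x hx ↦ ?_
    exact (Real.le_log_iff_exp_le ((Real.exp_pos b).trans_le hx)).2 hx

end Limsup

section PowerSum

open Matrix

variable {𝕜 : Type*} {r : ℕ} {lam : Fin r → 𝕜} (c : Fin r → 𝕜)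

theorem mul_pow_eq_sum_inv_vandermonde [Field 𝕜] (hlam : Function.Injective lam) (k : ℕ)
    (i : Fin r) :
    c i * lam i ^ k =
      ∑ j, (vandermonde lam)ᵀ⁻¹ i j * ∑ l, c l * lam l ^ (k + j) := by
  set A := (vandermonde lam)ᵀ
  have hA : IsUnit A.det := by
    rw [det_transpose, isUnit_iff_ne_zero]
    exact det_vandermonde_ne_zero_iff.2 hlam
  have hmul : A.mulVec (fun l ↦ c l * lam l ^ k) = fun j : Fin r ↦ ∑ l, c l * lam l ^ (k + j) := by
    ext j
    simp only [A, mulVec, dotProduct, transpose_apply, vandermonde_apply]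
    exact Finset.sum_congr rfl fun l _ ↦ by ring
  have hinv : A⁻¹.mulVec (fun j : Fin r ↦ ∑ l, c l * lam l ^ (k + j)) =
      fun l ↦ c l * lam l ^ k := by
    rw [← hmul, mulVec_mulVec, nonsing_inv_mul A hA, one_mulVec]
  exact (congrFun hinv i).symm

variable [NormedField 𝕜]

theorem exists_norm_mul_pow_le_of_norm_sum_le (hlam : Function.Injective lam) {M : ℝ} {K : ℕ}
    (hM : ∀ k ≥ K, ‖∑ l, c l * lam l ^ k‖ ≤ M ^ k) (i : Fin r) :
    ∃ B : ℝ, ∀ k ≥ K, ‖c i‖ * ‖lam i‖ ^ k ≤ B * M ^ k := by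
  refine ⟨∑ j : Fin r, ‖(vandermonde lam)ᵀ⁻¹ i j‖ * M ^ (j : ℕ), fun k hk ↦ ?_⟩
  rw [← norm_pow, ← norm_mul, mul_pow_eq_sum_inv_vandermonde c hlam k i, Finset.sum_mul]
  refine (norm_sum_le _ _).trans (Finset.sum_le_sum fun j _ ↦ ?_)
  rw [norm_mul, mul_assoc, ← pow_add, add_comm]
  exact mul_le_mul_of_nonneg_left (hM _ (le_add_left hk)) (norm_nonneg _)

theorem frequently_pow_lt_norm_sum_mul_pow (hlam : Function.Injective lam) {i : Fin r}
    (hc : c i ≠ 0) {M : ℝ} (hM : 0 < M) (hMi : M < ‖lam i‖) :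
    ∃ᶠ k in atTop, M ^ k < ‖∑ l, c l * lam l ^ k‖ := by
  by_contra h
  obtain ⟨K, hK⟩ := eventually_atTop.1 (not_frequently.1 h)
  obtain ⟨B, hB⟩ := exists_norm_mul_pow_le_of_norm_sum_le c hlam (fun k hk ↦ not_lt.1 (hK k hk)) i
  have hratio : Tendsto (fun k : ℕ ↦ ‖c i‖ * (‖lam i‖ / M) ^ k) atTop atTop :=
    (tendsto_pow_atTop_atTop_of_one_lt ((one_lt_div hM).2 hMi)).const_mul_atTop (norm_pos_iff.2 hc)
  obtain ⟨k, hkB, hkK⟩ := ((hratio.eventually_gt_atTop B).and (eventually_ge_atTop K)).exists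
  rw [div_pow, mul_div_assoc', lt_div_iff₀ (pow_pos hM k)] at hkB
  exact hkB.not_ge (hB k hkK)

theorem norm_sum_mul_pow_le {L : ℝ} (hL : ∀ l, ‖lam l‖ ≤ L) (k : ℕ) :
    ‖∑ l, c l * lam l ^ k‖ ≤ (∑ l, ‖c l‖) * L ^ k := by
  rw [Finset.sum_mul]
  refine (norm_sum_le _ _).trans (Finset.sum_le_sum fun l _ ↦ ?_)
  rw [norm_mul, norm_pow]
  exact mul_le_mul_of_nonneg_left (pow_le_pow_left₀ (norm_nonneg _) (hL l) k) (norm_nonneg _)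

end PowerSum

section NthRoot

variable {u : ℕ → ℝ} {L : ℝ}

theorem Real.log_rpow_one_div {x : ℝ} (hx : 0 ≤ x) (y : ℝ) :
    Real.log (x ^ (1 / y)) = Real.log x / y := by
  rcases hx.eq_or_lt with rfl | hx
  · rcases eq_or_ne y 0 with rfl | hy
    · simp
    · rw [Real.zero_rpow (one_div_ne_zero hy), Real.log_zero, zero_div]
  · rw [Real.log_rpow hx, one_div_mul_eq_div]

theorem eventually_rpow_one_div_le_of_le_mul_pow {C : ℝ} (hC : 0 < C) (hL : 0 ≤ L)
    (hu0 : ∀ᶠ k in atTop, 0 ≤ u k) (hu : ∀ᶠ k in atTop, u k ≤ C * L ^ k) {b : ℝ} (hb : L < b) :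
    ∀ᶠ k in atTop, u k ^ (1 / (k : ℝ)) ≤ b := by
  have hroot : Tendsto (fun k : ℕ ↦ C ^ (1 / (k : ℝ)) * L) atTop (𝓝 L) := by
    have := ((Real.continuousAt_const_rpow hC.ne').tendsto.comp
      tendsto_one_div_atTop_nhds_zero_nat).mul_const L
    simpa using this
  filter_upwards [hroot.eventually_lt_const hb, hu0, hu, eventually_ne_atTop 0]
    with k hk hk0 hkC hk1
  calc u k ^ (1 / (k : ℝ)) ≤ (C * L ^ k) ^ (1 / (k : ℝ)) :=
        Real.rpow_le_rpow hk0 hkC (by positivity)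
    _ = C ^ (1 / (k : ℝ)) * L := by
        rw [Real.mul_rpow hC.le (by positivity), one_div, Real.pow_rpow_inv_natCast hL hk1]
    _ ≤ b := hk.le

theorem frequently_le_rpow_one_div_of_frequently_pow_le (hL : 0 < L)
    (hu : ∀ M, 0 < M → M < L → ∃ᶠ k in atTop, M ^ k ≤ u k) {b : ℝ} (hb : b < L) :
    ∃ᶠ k in atTop, b ≤ u k ^ (1 / (k : ℝ)) := by
  set M := max b (L / 2)
  have hM : 0 < M := lt_max_of_lt_right (half_pos hL)
  refine ((hu M hM (max_lt hb (half_lt_self hL))).and_eventually (eventually_ne_atTop 0)).mono ?_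
  rintro k ⟨hk, hk0⟩
  calc b ≤ M := le_max_left _ _
    _ = (M ^ k) ^ (1 / (k : ℝ)) := by rw [one_div, Real.pow_rpow_inv_natCast hM.le hk0]
    _ ≤ u k ^ (1 / (k : ℝ)) := Real.rpow_le_rpow (by positivity) hk (by positivity)

end NthRoot

theorem exp_sum_growth_rate_general (r : ℕ) (lam : Fin r → ℂ) (ρ : Fin r → ℝ)
    (hlam_inj : Function.Injective lam)
    (hρ_ne : ∀ i, ρ i ≠ 0)
    (N : ℕ → ℝ) (hN_nonneg : ∀ k : ℕ, 1 ≤ k → 0 ≤ N k)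
    (hN : ∀ k : ℕ, 1 ≤ k → (N k : ℂ) = ∑ i, (ρ i : ℂ) * lam i ^ k)
    (L : ℝ) (hL_max : ∀ i, ‖lam i‖ ≤ L) (hL_mem : ∃ i, ‖lam i‖ = L)
    (hL : 1 < L) :
    Filter.limsup (fun k : ℕ => Real.log (N k) / k) Filter.atTop = Real.log L ∧
    Filter.limsup (fun k : ℕ => (N k) ^ ((1 : ℝ) / k)) Filter.atTop = L := by
  obtain ⟨i₀, hi₀⟩ := hL_mem
  have hL0 : 0 < L := zero_lt_one.trans hL
  have hN0 : ∀ᶠ k in atTop, 0 ≤ N k := eventually_atTop.2 ⟨1, hN_nonneg⟩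
  have hN_norm : ∀ᶠ k in atTop, N k = ‖∑ i, (ρ i : ℂ) * lam i ^ k‖ :=
    eventually_atTop.2 ⟨1, fun k hk ↦ by
      rw [← hN k hk, Complex.norm_real, Real.norm_of_nonneg (hN_nonneg k hk)]⟩
  have hC : 0 < ∑ i, ‖(ρ i : ℂ)‖ := Finset.sum_pos' (fun i _ ↦ norm_nonneg _)
    ⟨i₀, Finset.mem_univ _, norm_pos_iff.2 (Complex.ofReal_ne_zero.2 (hρ_ne i₀))⟩
  have hupper : ∀ᶠ k in atTop, N k ≤ (∑ i, ‖(ρ i : ℂ)‖) * L ^ k :=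
    hN_norm.mono fun k hk ↦ hk ▸ norm_sum_mul_pow_le _ hL_max k
  have hlower (M : ℝ) (hM : 0 < M) (hML : M < L) : ∃ᶠ k in atTop, M ^ k ≤ N k :=
    ((frequently_pow_lt_norm_sum_mul_pow _ hlam_inj (Complex.ofReal_ne_zero.2 (hρ_ne i₀)) hM
      (hi₀ ▸ hML)).and_eventually hN_norm).mono fun k hk ↦ hk.2 ▸ hk.1.le
  have hroot_up (b : ℝ) (hb : L < b) : ∀ᶠ k in atTop, N k ^ (1 / (k : ℝ)) ≤ b :=
    eventually_rpow_one_div_le_of_le_mul_pow hC hL0.le hN0 hupper hb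
  have hroot_low (b : ℝ) (hb : b < L) : ∃ᶠ k in atTop, b ≤ N k ^ (1 / (k : ℝ)) :=
    frequently_le_rpow_one_div_of_frequently_pow_le hL0 hlower hb
  refine ⟨?_, limsup_eq_of_forall_eventually_le_of_forall_frequently_ge hroot_up hroot_low⟩
  rw [← limsup_log_eq_log (hN0.mono fun k hk ↦ by positivity) hL.le hroot_up hroot_low]
  exact limsup_congr (hN0.mono fun k hk ↦ (Real.log_rpow_one_div hk k).symm)

theorem exp_sum_growth_rate (r : ℕ) (lam : Fin r → ℂ) (ρ : Fin r → ℝ)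
    (hlam_inj : Function.Injective lam) (hlam_ne : ∀ i, lam i ≠ 0)
    (hρ_ne : ∀ i, ρ i ≠ 0)
    (N : ℕ → ℝ) (hN_nonneg : ∀ k : ℕ, 1 ≤ k → 0 ≤ N k)
    (hN : ∀ k : ℕ, 1 ≤ k → (N k : ℂ) = ∑ i, (ρ i : ℂ) * lam i ^ k)
    (L : ℝ) (hL_max : ∀ i, ‖lam i‖ ≤ L) (hL_mem : ∃ i, ‖lam i‖ = L)
    (hL : 1 < L) :
    Filter.limsup (fun k : ℕ => Real.log (N k) / k) Filter.atTop = Real.log L ∧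
    Filter.limsup (fun k : ℕ => (N k) ^ ((1 : ℝ) / k)) Filter.atTop = L :=
  exp_sum_growth_rate_general r lam ρ hlam_inj hρ_ne N hN_nonneg hN L hL_max hL_mem hL
end

section
/- Let (N_k) be a sequence of complex numbers with N_k = Σ_{j=1}^n ρ_j λ_j^k, where λ_j are distinct complex numbers all of modulus λ > 0 and ρ_j are nonzero complex numbers. Then there exist γ > 0 and a natural number N such that for every m > N there is ℓ ∈ {0, 1, ..., n−1} with |N_{m+ℓ}|/λ^{m+ℓ} > γ. More generally, if N_k = Γ_k + Ω_k where Γ_k = Σ_{j=1}^n ρ_j λ_j^k with all |λ_j| = λ and Ω_k/λ^k → 0, the same conclusion holds for |N_{m+ℓ}|. -/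
/-!
Put `μ_j = λ_j / λ`, so that `Γ_k / λ^k = ∑_j ρ_j μ_j^k` with `|μ_j| = 1`. For every `m`, the
window `(Γ_{m+ℓ} / λ^{m+ℓ})_{ℓ < n}` is the transposed Vandermonde matrix `W` of the distinct
`μ_j` applied to `(ρ_j μ_j^m)_j`, a vector whose sup norm `‖ρ‖` does not depend on `m`. Since `W`
is invertible, the window has sup norm at least `‖W⁻¹‖⁻¹ ‖ρ‖ > 0`, so some entry is that large.
The perturbation `Ω_k / λ^k` tends to `0`, so it eventually costs at most half of this bound.
-/

open Filter Topology Matrix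

/-- The constant is `‖W⁻¹‖⁻¹` for the operator norm of `W⁻¹` on `ι → 𝕜` with the sup norm. -/
theorem Matrix.exists_pos_forall_exists_mul_norm_le_norm_mulVec_apply {ι 𝕜 : Type*} [Fintype ι]
    [DecidableEq ι] [Nonempty ι] [NormedField 𝕜] {W : Matrix ι ι 𝕜} (hW : IsUnit W.det) :
    ∃ c > 0, ∀ v : ι → 𝕜, ∃ ℓ, c * ‖v‖ ≤ ‖(W *ᵥ v) ℓ‖ := by
  let _ := Matrix.linftyOpNormedAddCommGroup (m := ι) (n := ι) (α := 𝕜)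
  have hW_inv : W⁻¹ ≠ 0 := fun h => by simpa [h] using nonsing_inv_mul W hW
  refine ⟨‖W⁻¹‖⁻¹, by positivity, fun v => ?_⟩
  obtain ⟨⟨ℓ, hℓ⟩, -⟩ := IsGreatest.pi_norm (W *ᵥ v)
  refine ⟨ℓ, ?_⟩
  rw [show ‖(W *ᵥ v) ℓ‖ = ‖W *ᵥ v‖ from hℓ, inv_mul_le_iff₀ (norm_pos_iff.mpr hW_inv)]
  simpa [mulVec_mulVec, nonsing_inv_mul W hW] using linfty_opNorm_mulVec W⁻¹ (W *ᵥ v)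

theorem pi_norm_mul_pow_of_norm_eq_one {ι 𝕜 : Type*} [Fintype ι] [NormedField 𝕜] (ρ μ : ι → 𝕜)
    (hμ : ∀ j, ‖μ j‖ = 1) (m : ℕ) : ‖fun j => ρ j * μ j ^ m‖ = ‖ρ‖ := by
  have hμ' : ∀ j, ‖μ j‖₊ = 1 := fun j => NNReal.eq (hμ j)
  simp [Pi.norm_def, hμ']

theorem exists_pos_forall_exists_le_norm_sum_mul_pow {𝕜 : Type*} [NormedField 𝕜] {n : ℕ}
    {μ ρ : Fin n → 𝕜} (hμ_inj : Function.Injective μ) (hμ : ∀ j, ‖μ j‖ = 1) (hρ : ρ ≠ 0) :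
    ∃ c > 0, ∀ m : ℕ, ∃ ℓ < n, c ≤ ‖∑ j, ρ j * μ j ^ (m + ℓ)‖ := by
  obtain ⟨j₀, -⟩ := Function.ne_iff.mp hρ
  have : Nonempty (Fin n) := ⟨j₀⟩
  have hW : IsUnit (vandermonde μ)ᵀ.det := by
    rw [det_transpose, isUnit_iff_ne_zero]
    exact det_vandermonde_ne_zero_iff.mpr hμ_inj
  obtain ⟨c, hc, hlarge⟩ := exists_pos_forall_exists_mul_norm_le_norm_mulVec_apply hW
  refine ⟨c * ‖ρ‖, mul_pos hc (norm_pos_iff.mpr hρ), fun m => ?_⟩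
  obtain ⟨ℓ, hℓ⟩ := hlarge fun j => ρ j * μ j ^ m
  refine ⟨ℓ, ℓ.isLt, ?_⟩
  have hwindow : ((vandermonde μ)ᵀ *ᵥ fun j => ρ j * μ j ^ m) ℓ = ∑ j, ρ j * μ j ^ (m + ℓ) := by
    simp only [mulVec, dotProduct, transpose_apply, vandermonde_apply, pow_add]
    exact Finset.sum_congr rfl fun j _ => by ring
  rwa [pi_norm_mul_pow_of_norm_eq_one ρ μ hμ, hwindow] at hℓ

theorem eventually_exists_lt_norm_add_of_tendsto_norm_zero {E : Type*}
    [SeminormedAddCommGroup E] {g e : ℕ → E} {c γ : ℝ} {p : ℕ}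
    (hg : ∀ m, ∃ ℓ < p, c ≤ ‖g (m + ℓ)‖) (he : Tendsto (fun k => ‖e k‖) atTop (𝓝 0))
    (hγ : γ < c) : ∀ᶠ m in atTop, ∃ ℓ < p, γ < ‖g (m + ℓ) + e (m + ℓ)‖ := by
  obtain ⟨N, hN⟩ := eventually_atTop.mp (he.eventually_lt_const (sub_pos.mpr hγ))
  filter_upwards [eventually_ge_atTop N] with m hm
  obtain ⟨ℓ, hℓp, hℓ⟩ := hg m
  refine ⟨ℓ, hℓp, ?_⟩
  have he_small := hN (m + ℓ) (by omega)
  have htriangle := norm_sub_norm_le (g (m + ℓ)) (-e (m + ℓ))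
  rw [norm_neg, sub_neg_eq_add] at htriangle
  linarith

theorem relatively_dense_large_values (n : ℕ) (hn : 0 < n)
    (lam : Fin n → ℂ) (ρ : Fin n → ℂ) (L : ℝ) (hL : 0 < L)
    (hlam_inj : Function.Injective lam) (hmod : ∀ j, ‖lam j‖ = L)
    (hρ_ne : ∀ j, ρ j ≠ 0)
    (N Γ Ω : ℕ → ℂ)
    (hΓ : ∀ k : ℕ, Γ k = ∑ j, ρ j * lam j ^ k)
    (hNsplit : ∀ k : ℕ, N k = Γ k + Ω k)
    (hΩ : Filter.Tendsto (fun k : ℕ => ‖Ω k‖ / L ^ k) Filter.atTop (nhds 0)) :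
    ∃ γ : ℝ, 0 < γ ∧ ∃ N₀ : ℕ, ∀ m : ℕ, N₀ < m →
      ∃ ℓ : ℕ, ℓ ≤ n - 1 ∧ ‖N (m + ℓ)‖ / L ^ (m + ℓ) > γ := by
  have hL' : (L : ℂ) ≠ 0 := Complex.ofReal_ne_zero.mpr hL.ne'
  have hnorm_div (z : ℂ) (k : ℕ) : ‖z / (L : ℂ) ^ k‖ = ‖z‖ / L ^ k := by
    rw [norm_div, norm_pow, Complex.norm_real, Real.norm_of_nonneg hL.le]
  have hμ (j : Fin n) : ‖lam j / L‖ = 1 := by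
    simpa [hmod, hL.ne'] using hnorm_div (lam j) 1
  have hμ_inj : Function.Injective fun j => lam j / L :=
    fun i j h => hlam_inj ((div_left_inj' hL').mp h)
  have hρ : ρ ≠ 0 := fun h => hρ_ne ⟨0, hn⟩ (congrFun h _)
  obtain ⟨c, hc, hlarge⟩ := exists_pos_forall_exists_le_norm_sum_mul_pow hμ_inj hμ hρ
  have hΓ_scaled (k : ℕ) : ∑ j, ρ j * (lam j / L) ^ k = Γ k / (L : ℂ) ^ k := by
    simp only [hΓ, Finset.sum_div, div_pow, mul_div_assoc]
  have hΩ_scaled : Tendsto (fun k => ‖Ω k / (L : ℂ) ^ k‖) atTop (𝓝 0) := by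
    simpa only [hnorm_div] using hΩ
  simp only [hΓ_scaled] at hlarge
  obtain ⟨N₀, hN₀⟩ := eventually_atTop.mp
    (eventually_exists_lt_norm_add_of_tendsto_norm_zero (g := fun k => Γ k / (L : ℂ) ^ k) hlarge
      hΩ_scaled (half_lt_self hc))
  refine ⟨c / 2, half_pos hc, N₀, fun m hm => ?_⟩
  obtain ⟨ℓ, hℓn, hℓ⟩ := hN₀ m hm.le
  refine ⟨ℓ, by omega, ?_⟩
  rwa [hNsplit, ← hnorm_div, add_div]
end

section
/- Let (N_k) be a sequence of integers given by N_k = tr(M^k) for a fixed integer square matrix M. Then there exists an odd positive integer α such that N_{k+α} ≡ N_k (mod 2) for all k ≥ 1. -/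
/-!
Reduce modulo 2 and work over any finite field `K` with `q` elements, where the Frobenius gives
`tr (A ^ (q * k)) = tr (A ^ k) ^ q = tr (A ^ k)`. The powers of `A` are eventually periodic, say
with period `P = p ^ e * m` where `p = char K` does not divide `m`. Multiplying exponents by a
large power of `q` makes `p ^ e * m` divide `q ^ j * m` and pushes `q ^ j * k` past the
preperiod, so shifting `k` by the `p`-free part `m` of the period does not change the trace.
-/

open Matrix

theorem exists_pow_add_eq_pow_of_finite {M : Type*} [Monoid M] [Finite M] (a : M) :
    ∃ i P : ℕ, 0 < P ∧ a ^ (i + P) = a ^ i := by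
  obtain ⟨i, j, hij, h⟩ :=
    Set.finite_univ.exists_lt_map_eq_of_forall_mem (f := fun n : ℕ ↦ a ^ n) fun _ ↦ Set.mem_univ _
  obtain ⟨P, rfl⟩ := Nat.exists_eq_add_of_lt hij
  exact ⟨i, P + 1, P.succ_pos, by rw [← add_assoc, ← h]⟩

theorem pow_add_eq_pow_of_dvd {M : Type*} [Monoid M] {a : M} {i P d b : ℕ}
    (hper : a ^ (i + P) = a ^ i) (hd : P ∣ d) (hb : i ≤ b) : a ^ (b + d) = a ^ b := by
  obtain ⟨c, rfl⟩ := hd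
  have hi : a ^ (i + P * c) = a ^ i := by
    induction c with
    | zero => simp
    | succ c ih => rw [mul_add_one, ← add_assoc, pow_add, ih, ← pow_add, hper]
  obtain ⟨b, rfl⟩ := Nat.exists_eq_add_of_le hb
  rw [add_comm i b, add_assoc, pow_add, hi, ← pow_add]

theorem FiniteField.trace_pow_card_pow_mul {K ι : Type*} [Field K] [Fintype K] [Fintype ι]
    [DecidableEq ι] (A : Matrix ι ι K) (j k : ℕ) :
    trace (A ^ (Fintype.card K ^ j * k)) = trace (A ^ k) := by
  induction j with
  | zero => simp
  | succ j ih =>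
    rw [pow_succ, mul_right_comm, pow_mul, FiniteField.trace_pow_card, ih, FiniteField.pow_card]

theorem FiniteField.exists_coprime_trace_pow_add_eq {K ι : Type*} [Field K] [Fintype K]
    [Fintype ι] [DecidableEq ι] (p : ℕ) [CharP K p] (A : Matrix ι ι K) :
    ∃ α : ℕ, α.Coprime p ∧ 0 < α ∧ ∀ k : ℕ, 1 ≤ k → trace (A ^ (k + α)) = trace (A ^ k) := by
  obtain ⟨i, P, hP, hper⟩ := exists_pow_add_eq_pow_of_finite A
  obtain ⟨r, hp, hcard⟩ := FiniteField.card K p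
  obtain ⟨e, m, hm, rfl⟩ := Nat.exists_eq_pow_mul_and_not_dvd hP.ne' p hp.one_lt.ne'
  refine ⟨m, ((Nat.Prime.coprime_iff_not_dvd hp).mpr hm).symm,
    Nat.pos_of_ne_zero (by rintro rfl; simp at hP), fun k hk ↦ ?_⟩
  set q := Fintype.card K
  have hq : 1 < q := Fintype.one_lt_card
  have hdvd : p ^ e * m ∣ q ^ (e + i) * m := by
    refine mul_dvd_mul_right ?_ m
    rw [hcard]
    exact (pow_dvd_pow p (Nat.le_add_right e i)).trans
      (pow_dvd_pow_of_dvd (dvd_pow_self p r.ne_zero) _)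
  have hle : i ≤ q ^ (e + i) * k :=
    calc i ≤ q ^ i := (Nat.lt_pow_self hq).le
      _ ≤ q ^ (e + i) := Nat.pow_le_pow_right hq.le (Nat.le_add_left i e)
      _ ≤ q ^ (e + i) * k := Nat.le_mul_of_pos_right _ hk
  rw [← FiniteField.trace_pow_card_pow_mul A (e + i), mul_add,
    pow_add_eq_pow_of_dvd hper hdvd hle, FiniteField.trace_pow_card_pow_mul]

theorem trace_mod_two_periodic (n : ℕ) (M : Matrix (Fin n) (Fin n) ℤ) :
    ∃ α : ℕ, Odd α ∧ 0 < α ∧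
      ∀ k : ℕ, 1 ≤ k → (M ^ (k + α)).trace ≡ (M ^ k).trace [ZMOD 2] := by
  obtain ⟨α, hcop, hpos, hper⟩ :=
    FiniteField.exists_coprime_trace_pow_add_eq 2 (M.map (Int.castRingHom (ZMod 2)))
  refine ⟨α, Nat.coprime_two_right.mp hcop, hpos, fun k hk ↦ ?_⟩
  refine (ZMod.intCast_eq_intCast_iff _ _ 2).mp ?_
  simpa only [← Matrix.map_pow, ← AddMonoidHom.map_trace, eq_intCast] using hper k hk
end
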